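/- Let A, B, C, D be traceless complex N×N matrices with N ∈ {2, 3}. Then tr(ABCD + ABDC + ACBD + ACDB + ADBC + ADCB) = tr(AB)tr(CD) + tr(AC)tr(BD) + tr(AD)tr(BC). -/
import Mathlib


/-- **Six-term trace identity for traceless matrices of dimension 2 or 3.**
For traceless complex `N×N` matrices `A, B, C, D` with `N ∈ {2, 3}`,
`tr(ABCD + ABDC + ACBD + ACDB + ADBC + ADCB)
  = tr(AB)tr(CD) + tr(AC)tr(BD) + tr(AD)tr(BC)`. -/
theorem six_term_trace_identity {N : ℕ} (hN : N = 2 ∨ N = 3)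
    (A B C D : Matrix (Fin N) (Fin N) ℂ)
    (hA : A.trace = 0) (hB : B.trace = 0) (hC : C.trace = 0) (hD : D.trace = 0) :
    (A * B * C * D).trace + (A * B * D * C).trace + (A * C * B * D).trace
      + (A * C * D * B).trace + (A * D * B * C).trace + (A * D * C * B).trace
    = (A * B).trace * (C * D).trace + (A * C).trace * (B * D).trace
      + (A * D).trace * (B * C).trace := by
  rcases hN with rfl | rfl
  · simp only [Matrix.trace, Matrix.mul_apply, Fin.sum_univ_succ, Fin.sum_univ_zero,
      Matrix.diag_apply, add_zero] at hA hB hC hD ⊢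
    have h1 : A (Fin.succ 0) (Fin.succ 0) = -A 0 0 := by linear_combination hA
    have h2 : B (Fin.succ 0) (Fin.succ 0) = -B 0 0 := by linear_combination hB
    have h3 : C (Fin.succ 0) (Fin.succ 0) = -C 0 0 := by linear_combination hC
    have h4 : D (Fin.succ 0) (Fin.succ 0) = -D 0 0 := by linear_combination hD
    rw [h1, h2, h3, h4]; ring
  · simp only [Matrix.trace, Matrix.mul_apply, Fin.sum_univ_succ, Fin.sum_univ_zero,
      Matrix.diag_apply, add_zero] at hA hB hC hD ⊢
    have h1 : A (Fin.succ (Fin.succ 0)) (Fin.succ (Fin.succ 0))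
        = -A 0 0 - A (Fin.succ 0) (Fin.succ 0) := by linear_combination hA
    have h2 : B (Fin.succ (Fin.succ 0)) (Fin.succ (Fin.succ 0))
        = -B 0 0 - B (Fin.succ 0) (Fin.succ 0) := by linear_combination hB
    have h3 : C (Fin.succ (Fin.succ 0)) (Fin.succ (Fin.succ 0))
        = -C 0 0 - C (Fin.succ 0) (Fin.succ 0) := by linear_combination hC
    have h4 : D (Fin.succ (Fin.succ 0)) (Fin.succ (Fin.succ 0))
        = -D 0 0 - D (Fin.succ 0) (Fin.succ 0) := by linear_combination hD
    rw [h1, h2, h3, h4]; ring
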